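/- Let x be an L² random vector in ℝⁿ with covariance Σ, let W and Φ be n×m real matrices with Φ Wᵀ ≠ 0, set f := Wᵀx and ε := x − Φf. If Cov(Φf, ε) = 0, then Cov(ε) does not have full rank n, i.e., Cov(ε) is singular. -/

import Mathlib

open MeasureTheory Matrix

/-- Componentwise mean of a random vector. -/
noncomputable def vMean {Ω : Type*} [MeasurableSpace Ω] (μ : Measure Ω) {n : ℕ}
    (u : Ω → Fin n → ℝ) : Fin n → ℝ :=
  fun i => ∫ ω, u ω i ∂μ

/-- Covariance matrix Cov(u,v) = E[(u - Eu)(v - Ev)ᵀ]. -/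
noncomputable def vCov {Ω : Type*} [MeasurableSpace Ω] (μ : Measure Ω) {n m : ℕ}
    (u : Ω → Fin n → ℝ) (v : Ω → Fin m → ℝ) : Matrix (Fin n) (Fin m) ℝ :=
  Matrix.of fun i j => ∫ ω, (u ω i - vMean μ u i) * (v ω j - vMean μ v j) ∂μ

private lemma int_mul2 {Ω : Type*} [MeasurableSpace Ω] {μ : Measure Ω} {f g : Ω → ℝ}
    (hf : MemLp f 2 μ) (hg : MemLp g 2 μ) : Integrable (fun ω => f ω * g ω) μ := by
  rw [← memLp_one_iff_integrable]
  exact hg.smul (φ := f) hf (p := 2) (q := 2) (r := 1)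

private lemma int_centered {Ω : Type*} [MeasurableSpace Ω] {μ : Measure Ω} [IsFiniteMeasure μ]
    {F G : Ω → ℝ} (c d : ℝ) (hF : MemLp F 2 μ) (hG : MemLp G 2 μ) :
    Integrable (fun ω => (F ω - c) * (G ω - d)) μ :=
  int_mul2 (hF.sub (memLp_const c)) (hG.sub (memLp_const d))

private lemma vMean_mulVec {Ω : Type*} [MeasurableSpace Ω] (μ : Measure Ω) [IsFiniteMeasure μ]
    {n m : ℕ} (A : Matrix (Fin n) (Fin m) ℝ) (u : Ω → Fin m → ℝ)
    (hu : ∀ k, MemLp (fun ω => u ω k) 2 μ) (i : Fin n) :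
    vMean μ (fun ω => A.mulVec (u ω)) i = ∑ k, A i k * vMean μ u k := by
  unfold vMean
  simp only [mulVec, dotProduct]
  rw [integral_finset_sum _ (fun k _ => ((hu k).integrable one_le_two).const_mul (A i k))]
  simp only [integral_const_mul]

private lemma vCov_mulVec_left {Ω : Type*} [MeasurableSpace Ω] (μ : Measure Ω)
    [IsFiniteMeasure μ] {n m p : ℕ} (A : Matrix (Fin n) (Fin m) ℝ)
    (u : Ω → Fin m → ℝ) (v : Ω → Fin p → ℝ)
    (hu : ∀ k, MemLp (fun ω => u ω k) 2 μ) (hv : ∀ j, MemLp (fun ω => v ω j) 2 μ) :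
    vCov μ (fun ω => A.mulVec (u ω)) v = A * vCov μ u v := by
  ext i j
  rw [Matrix.mul_apply]
  show (∫ ω, (A.mulVec (u ω) i - vMean μ (fun ω => A.mulVec (u ω)) i)
      * (v ω j - vMean μ v j) ∂μ) = _
  have hint : ∀ k : Fin m, Integrable
      (fun ω => A i k * ((u ω k - vMean μ u k) * (v ω j - vMean μ v j))) μ :=
    fun k => (int_centered _ _ (hu k) (hv j)).const_mul _
  have heq : ∀ ω, (A.mulVec (u ω) i - vMean μ (fun ω => A.mulVec (u ω)) i)
      * (v ω j - vMean μ v j)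
      = ∑ k, A i k * ((u ω k - vMean μ u k) * (v ω j - vMean μ v j)) := by
    intro ω
    rw [vMean_mulVec μ A u hu i]
    simp only [mulVec, dotProduct]
    rw [← Finset.sum_sub_distrib, Finset.sum_mul]
    exact Finset.sum_congr rfl fun k _ => by ring
  simp only [heq]
  rw [integral_finset_sum _ (fun k _ => hint k)]
  simp only [integral_const_mul]
  rfl

private lemma vCov_sub_left {Ω : Type*} [MeasurableSpace Ω] (μ : Measure Ω)
    [IsFiniteMeasure μ] {n p : ℕ} (u w : Ω → Fin n → ℝ) (v : Ω → Fin p → ℝ)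
    (hu : ∀ k, MemLp (fun ω => u ω k) 2 μ) (hw : ∀ k, MemLp (fun ω => w ω k) 2 μ)
    (hv : ∀ j, MemLp (fun ω => v ω j) 2 μ) :
    vCov μ (fun ω => u ω - w ω) v = vCov μ u v - vCov μ w v := by
  have hmean : ∀ i, vMean μ (fun ω => u ω - w ω) i = vMean μ u i - vMean μ w i := by
    intro i
    unfold vMean
    simp only [Pi.sub_apply]
    exact integral_sub ((hu i).integrable one_le_two) ((hw i).integrable one_le_two)
  ext i j
  show (∫ ω, ((u ω - w ω) i - vMean μ (fun ω => u ω - w ω) i) * (v ω j - vMean μ v j) ∂μ)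
      = _
  have heq : ∀ ω, ((u ω - w ω) i - vMean μ (fun ω => u ω - w ω) i) * (v ω j - vMean μ v j)
      = (u ω i - vMean μ u i) * (v ω j - vMean μ v j)
        - (w ω i - vMean μ w i) * (v ω j - vMean μ v j) := by
    intro ω
    rw [hmean i]
    simp only [Pi.sub_apply]
    ring
  simp only [heq]
  rw [integral_sub (int_centered _ _ (hu i) (hv j)) (int_centered _ _ (hw i) (hv j))]
  rfl

theorem stmt5 {Ω : Type*} [MeasurableSpace Ω] (μ : Measure Ω) [IsProbabilityMeasure μ]
    {n m : ℕ} (x : Ω → Fin n → ℝ)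
    (hx : ∀ i, MemLp (fun ω => x ω i) 2 μ)
    (W Φ : Matrix (Fin n) (Fin m) ℝ) (hnd : Φ * Wᵀ ≠ 0)
    (f : Ω → Fin m → ℝ) (hf : f = fun ω => Wᵀ.mulVec (x ω))
    (ε : Ω → Fin n → ℝ) (hε : ε = fun ω => x ω - Φ.mulVec (f ω))
    (huncorr : vCov μ (fun ω => Φ.mulVec (f ω)) ε = 0) :
    (vCov μ ε ε).rank < n := by
  subst hf
  subst hε
  set B : Matrix (Fin n) (Fin n) ℝ := Φ * Wᵀ with hB
  have hcomp : ∀ ω, Φ.mulVec (Wᵀ.mulVec (x ω)) = B.mulVec (x ω) := fun ω =>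
    Matrix.mulVec_mulVec (x ω) Φ Wᵀ
  simp only [hcomp] at huncorr ⊢
  set ε' : Ω → Fin n → ℝ := fun ω => x ω - B.mulVec (x ω) with hε'
  have hg : ∀ i, MemLp (fun ω => B.mulVec (x ω) i) 2 μ := by
    intro i
    simp only [mulVec, dotProduct]
    exact memLp_finset_sum _ fun k _ => (hx k).const_mul (B i k)
  have hε2 : ∀ i, MemLp (fun ω => ε' ω i) 2 μ := by
    intro i
    simp only [hε', Pi.sub_apply]
    exact (hx i).sub (hg i)
  have h1 : vCov μ (fun ω => B.mulVec (x ω)) ε' = B * vCov μ x ε' :=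
    vCov_mulVec_left μ B x ε' hx hε2
  have h2 : vCov μ ε' ε' = vCov μ x ε' - vCov μ (fun ω => B.mulVec (x ω)) ε' :=
    vCov_sub_left μ x (fun ω => B.mulVec (x ω)) ε' hx hg hε2
  have hmul : B * vCov μ ε' ε' = 0 := by
    rw [h2, huncorr, sub_zero, ← h1, huncorr]
  have hrank := Matrix.rank_add_rank_le_card_of_mul_eq_zero hmul
  rw [Fintype.card_fin] at hrank
  have hBpos : 0 < B.rank := by
    rcases Nat.eq_zero_or_pos B.rank with h0 | h
    · exfalso
      apply hnd
      have hbot : LinearMap.range B.mulVecLin = ⊥ := by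
        rw [Matrix.rank] at h0
        exact Submodule.finrank_eq_zero.mp h0
      have hz : B.mulVecLin = 0 := LinearMap.range_eq_bot.mp hbot
      ext i j
      have := congrArg (fun f => f (Pi.single j 1) i) hz
      simpa [Matrix.mulVecLin_apply, Matrix.mulVec_single] using this
    · exact h
  omega
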